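/- arXiv:2310.12845 — 3 statements merged into one kernel-verified Lean document; each statement's English description precedes it below -/
import Mathlib

section
/- The operator norm of the odd extension map E: C([-h,0],ℝ) → C(J,ℝ) equals 3, provided J properly contains [-h,0] on at least one side (i.e., J contains points t>0 or t<-h). -/
noncomputable def oddExtFormula (h : ℝ) (hh : -h ≤ (0:ℝ))
    (φ : C(Set.Icc (-h) 0, ℝ)) (t : ℝ) : ℝ :=
  if t < -h then
    2 * φ (Set.projIcc (-h) 0 hh (-h)) - φ (Set.projIcc (-h) 0 hh (-t - 2*h))
  else if t ≤ 0 then φ (Set.projIcc (-h) 0 hh t)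
  else 2 * φ (Set.projIcc (-h) 0 hh 0) - φ (Set.projIcc (-h) 0 hh (-t))

lemma oddExt_abs_le (h : ℝ) (hh : -h ≤ (0:ℝ)) (φ : C(Set.Icc (-h) 0, ℝ)) (t : ℝ) :
    |oddExtFormula h hh φ t| ≤ 3 * ‖φ‖ := by
  have key : ∀ x : Set.Icc (-h) 0, |φ x| ≤ ‖φ‖ := fun x => φ.norm_coe_le_norm x
  unfold oddExtFormula
  split_ifs with h1 h2
  · have a1 := key (Set.projIcc (-h) 0 hh (-h))
    have a2 := key (Set.projIcc (-h) 0 hh (-t - 2*h))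
    calc |2 * φ (Set.projIcc (-h) 0 hh (-h)) - φ (Set.projIcc (-h) 0 hh (-t - 2*h))|
        ≤ |2 * φ (Set.projIcc (-h) 0 hh (-h))| + |φ (Set.projIcc (-h) 0 hh (-t - 2*h))| :=
          abs_sub _ _
      _ ≤ 3 * ‖φ‖ := by rw [abs_mul]; simp only [abs_two]; linarith
  · have := key (Set.projIcc (-h) 0 hh t)
    have := norm_nonneg φ
    linarith [abs_nonneg (φ (Set.projIcc (-h) 0 hh t))]
  · have a1 := key (Set.projIcc (-h) 0 hh 0)
    have a2 := key (Set.projIcc (-h) 0 hh (-t))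
    calc |2 * φ (Set.projIcc (-h) 0 hh 0) - φ (Set.projIcc (-h) 0 hh (-t))|
        ≤ |2 * φ (Set.projIcc (-h) 0 hh 0)| + |φ (Set.projIcc (-h) 0 hh (-t))| := abs_sub _ _
      _ ≤ 3 * ‖φ‖ := by rw [abs_mul]; simp only [abs_two]; linarith

lemma exists_phi (h p q : ℝ) (hp : p ∈ Set.Icc (-h) 0) (hq : q ∈ Set.Icc (-h) 0)
    (hpq : p ≠ q) :
    ∃ φ : C(Set.Icc (-h) 0, ℝ), ‖φ‖ ≤ 1 ∧ φ ⟨p, hp⟩ = 1 ∧ φ ⟨q, hq⟩ = -1 := by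
  refine ⟨⟨fun x => max (-1) (min 1 (2 * ((x : ℝ) - q) / (p - q) - 1)), by fun_prop⟩, ?_, ?_, ?_⟩
  · rw [ContinuousMap.norm_le _ (by norm_num)]
    intro x
    rw [Real.norm_eq_abs, abs_le]
    constructor
    · exact le_max_left _ _
    · exact max_le (by norm_num) (min_le_left _ _)
  · have hne : p - q ≠ 0 := sub_ne_zero.mpr hpq
    simp only [ContinuousMap.coe_mk]
    have : 2 * (p - q) / (p - q) - 1 = 1 := by
      rw [mul_div_assoc, div_self hne]; ring
    simp [this]
  · simp only [ContinuousMap.coe_mk]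
    norm_num

/-- the operator norm of the odd extension map equals 3, provided `J=[a,b]`
properly contains `[-h,0]` on at least one side. -/
theorem stmt1 (h a b : ℝ) (hh : 0 < h) (h2a : -(2*h) ≤ a) (hah : a ≤ -h)
    (hb0 : 0 ≤ b) (hbh : b ≤ h) (hproper : a < -h ∨ 0 < b)
    (E : C(Set.Icc (-h) 0, ℝ) →L[ℝ] C(Set.Icc a b, ℝ))
    (hE : ∀ (φ : C(Set.Icc (-h) 0, ℝ)) (t : Set.Icc a b),
        E φ t = oddExtFormula h (by linarith) φ (t : ℝ)) :
    ‖E‖ = 3 := by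
  have hh' : -h ≤ (0:ℝ) := by linarith
  apply le_antisymm
  · refine E.opNorm_le_bound (by norm_num) (fun φ => ?_)
    rw [ContinuousMap.norm_le _ (by positivity)]
    intro t
    rw [hE φ t, Real.norm_eq_abs]
    exact oddExt_abs_le h hh' φ t
  · -- lower bound
    have hab : a ≤ b := by linarith
    have key : ∀ (φ : C(Set.Icc (-h) 0, ℝ)) (t : Set.Icc a b), ‖φ‖ ≤ 1 →
        oddExtFormula h hh' φ (t : ℝ) = 3 → 3 ≤ ‖E‖ := by
      intro φ t hφ hval
      have h1 : (3:ℝ) = |(E φ) t| := by rw [hE φ t, hval]; norm_num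
      calc (3:ℝ) = |(E φ) t| := h1
        _ ≤ ‖E φ‖ := (E φ).norm_coe_le_norm t
        _ ≤ ‖E‖ * ‖φ‖ := E.le_opNorm φ
        _ ≤ ‖E‖ * 1 := mul_le_mul_of_nonneg_left hφ (norm_nonneg E)
        _ = ‖E‖ := mul_one _
    rcases hproper with hprop | hprop
    · -- use t = a, p = -h, q = -a - 2*h
      have hp : -h ∈ Set.Icc (-h) 0 := ⟨le_refl _, hh'⟩
      have hq : -a - 2*h ∈ Set.Icc (-h) 0 := ⟨by linarith, by linarith⟩
      have hpq : -h ≠ -a - 2*h := by intro he; linarith [he]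
      obtain ⟨φ, hφ1, hφp, hφq⟩ := exists_phi h (-h) (-a - 2*h) hp hq hpq
      refine key φ ⟨a, le_refl _, hab⟩ hφ1 ?_
      have : Set.projIcc (-h) 0 hh' (-h) = ⟨-h, hp⟩ := Set.projIcc_of_mem hh' hp
      have h2 : Set.projIcc (-h) 0 hh' (-a - 2*h) = ⟨-a - 2*h, hq⟩ := Set.projIcc_of_mem hh' hq
      rw [oddExtFormula, if_pos hprop, this, h2, hφp, hφq]
      ring
    · -- use t = b, p = 0, q = -b
      have hp : (0:ℝ) ∈ Set.Icc (-h) 0 := ⟨hh', le_refl _⟩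
      have hq : -b ∈ Set.Icc (-h) 0 := ⟨by linarith, by linarith⟩
      have hpq : (0:ℝ) ≠ -b := by intro he; linarith [he]
      obtain ⟨φ, hφ1, hφp, hφq⟩ := exists_phi h 0 (-b) hp hq hpq
      refine key φ ⟨b, hab, le_refl _⟩ hφ1 ?_
      have h1 : Set.projIcc (-h) 0 hh' 0 = ⟨0, hp⟩ := Set.projIcc_of_mem hh' hp
      have h2 : Set.projIcc (-h) 0 hh' (-b) = ⟨-b, hq⟩ := Set.projIcc_of_mem hh' hq
      rw [oddExtFormula, if_neg (by push_neg; linarith), if_neg (by push_neg; linarith),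
        h1, h2, hφp, hφq]
      ring
end

section
/- (Projection onto moving nullspaces) Let K=J^k with J a compact interval, q: K × C → F continuous with each q(r,·) linear, and suppose there exist γ₁,…,γ_d ∈ C¹ with γ_m'(0)=0 such that for every r∈K the vectors q(r,γ₁),…,q(r,γ_d) form a basis of the (r-independent) range F_q. Then for every ε>0 there exists a continuous map χ: K → C¹ such that for every r∈K: q(r,χ(r))=0, (χ(r))'(0)=1, and the supremum norm |χ(r)|_C < ε. -/
/-! Solving `q r ψ = ∑ cₘ • q r γₘ` through the Gram matrix of the `q r γₘ` (for some Euclidean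
structure on `F`) gives coefficients `c(r, ψ)` that are continuous in `(r, ψ)` and vanish at
`ψ = 0`, so `ψ ↦ ψ - ∑ cₘ(r, ψ) • γₘ` lands in `ker (q r)`. By compactness of `K`, it maps a small
ball around `0` into the `ε`-ball uniformly in `r`. Applying it to `s sin (t / s)`, which has slope
`1` at `0` and sup norm at most `s`, gives `χ`; the slope stays `1` because `γₘ'(0) = 0`. -/

/-- Extension of a continuous map on `[-h,0]` to `ℝ` via the projection onto `[-h,0]`;
used to speak about differentiability of elements of `C([-h,0],ℝ)`. -/
noncomputable def extF (h : ℝ) (hh : -h ≤ (0:ℝ)) (φ : C(Set.Icc (-h) 0, ℝ)) : ℝ → ℝ :=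
  fun s => φ (Set.projIcc (-h) 0 hh s)

open Set Submodule

section GramCoeffs

open Matrix

variable {ι E : Type*} [Fintype ι] [NormedAddCommGroup E] [InnerProductSpace ℝ E]

lemma gram_mulVec (v : ι → E) (c : ι → ℝ) :
    gram ℝ v *ᵥ c = fun i => inner ℝ (v i) (∑ j, c j • v j) := by
  ext i
  simp [mulVec, dotProduct, gram_apply, inner_sum, inner_smul_right, mul_comm]

variable [DecidableEq ι]

noncomputable def gramCoeffs (v : ι → E) (x : E) : ι → ℝ :=
  (gram ℝ v)⁻¹ *ᵥ fun i => inner ℝ (v i) x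

@[simp]
lemma gramCoeffs_zero (v : ι → E) : gramCoeffs v 0 = 0 := by
  simp [gramCoeffs, ← Pi.zero_def]

lemma sum_gramCoeffs_smul {v : ι → E} (hv : LinearIndependent ℝ v) {x : E}
    (hx : x ∈ span ℝ (range v)) : ∑ i, gramCoeffs v x i • v i = x := by
  obtain ⟨c, rfl⟩ := (mem_span_range_iff_exists_fun ℝ).1 hx
  have hdet : IsUnit (gram ℝ v).det :=
    (det_gram_ne_zero_iff_linearIndependent.2 hv).isUnit
  rw [gramCoeffs, ← gram_mulVec, mulVec_mulVec, nonsing_inv_mul _ hdet, one_mulVec]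

lemma Continuous.gramCoeffs {K : Type*} [TopologicalSpace K] {v : K → ι → E} {x : K → E}
    (hv : Continuous v) (hx : Continuous x) (hli : ∀ r, LinearIndependent ℝ (v r)) :
    Continuous fun r => gramCoeffs (v r) (x r) := by
  have hG : Continuous fun r => gram ℝ (v r) :=
    continuous_matrix fun i j => ((continuous_apply i).comp hv).inner ((continuous_apply j).comp hv)
  have hGinv : Continuous fun r => (gram ℝ (v r))⁻¹ := by
    simp only [inv_def, Ring.inverse_eq_inv]
    exact (hG.matrix_det.inv₀ fun r => det_gram_ne_zero_iff_linearIndependent.2 (hli r)).smul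
      hG.matrix_adjugate
  exact hGinv.matrix_mulVec (continuous_pi fun i => ((continuous_apply i).comp hv).inner hx)

end GramCoeffs

lemma exists_continuous_coeffs_of_linearIndependent {K F ι : Type*} [TopologicalSpace K]
    [Fintype ι] [NormedAddCommGroup F] [NormedSpace ℝ F] [FiniteDimensional ℝ F]
    {v : K → ι → F} (hv : Continuous v) (hli : ∀ r, LinearIndependent ℝ (v r)) :
    ∃ c : K → F → ι → ℝ, Continuous (fun p : K × F => c p.1 p.2) ∧ (∀ r, c r 0 = 0) ∧
      ∀ r x, x ∈ span ℝ (range (v r)) → ∑ i, c r x i • v r i = x := by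
  classical
  let T := toEuclidean (E := F)
  have hTli : ∀ r, LinearIndependent ℝ (T ∘ v r) :=
    fun r => (hli r).map' T.toLinearMap T.toLinearEquiv.ker
  have hTv : Continuous fun p : K × F => T ∘ v p.1 :=
    continuous_pi fun i => T.continuous.comp ((continuous_apply i).comp (hv.comp continuous_fst))
  refine ⟨fun r x => gramCoeffs (T ∘ v r) (T x),
    hTv.gramCoeffs (T.continuous.comp continuous_snd) fun p => hTli p.1,
    fun r => by simp, fun r x hx => T.injective ?_⟩
  simp only [map_sum, map_smul]
  refine sum_gramCoeffs_smul (hTli r) ?_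
  rw [range_comp]
  exact apply_mem_span_image_of_mem_span T.toLinearMap hx

lemma exists_continuous_coeffs_sub_sum_mem_ker {K E F ι : Type*} [TopologicalSpace K]
    [Fintype ι] [NormedAddCommGroup E] [NormedSpace ℝ E]
    [NormedAddCommGroup F] [NormedSpace ℝ F] [FiniteDimensional ℝ F]
    (q : K → E →ₗ[ℝ] F) (hq : Continuous fun p : K × E => q p.1 p.2) (γ : ι → E)
    (hli : ∀ r, LinearIndependent ℝ fun i => q r (γ i))
    (hspan : ∀ r ψ, q r ψ ∈ span ℝ (range fun i => q r (γ i))) :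
    ∃ a : K → E → ι → ℝ, Continuous (fun p : K × E => a p.1 p.2) ∧ (∀ r, a r 0 = 0) ∧
      ∀ r ψ, ψ - ∑ i, a r ψ i • γ i ∈ LinearMap.ker (q r) := by
  have hv : Continuous fun r i => q r (γ i) :=
    continuous_pi fun i => hq.comp (continuous_id.prodMk continuous_const)
  obtain ⟨c, hc, hc0, hsum⟩ := exists_continuous_coeffs_of_linearIndependent hv hli
  refine ⟨fun r ψ => c r (q r ψ), hc.comp (continuous_fst.prodMk hq), fun r => by simp [hc0],
    fun r ψ => ?_⟩
  rw [LinearMap.mem_ker, map_sub, map_sum]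
  simp only [map_smul]
  rw [hsum r _ (hspan r ψ), sub_self]

open Filter Topology in
lemma exists_pos_forall_norm_lt {K E G : Type*} [TopologicalSpace K] [CompactSpace K]
    [SeminormedAddCommGroup E] [SeminormedAddCommGroup G] {Φ : K → E → G}
    (hΦ : Continuous fun p : K × E => Φ p.1 p.2) (hΦ0 : ∀ r, Φ r 0 = 0) {ε : ℝ} (hε : 0 < ε) :
    ∃ δ > 0, ∀ r ψ, ‖ψ‖ < δ → ‖Φ r ψ‖ < ε := by
  have hnear : ∀ᶠ ψ in 𝓝 (0 : E), ∀ r ∈ univ, ‖Φ r ψ‖ < ε := by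
    refine isCompact_univ.eventually_forall_of_forall_eventually fun r _ => ?_
    have hcont : Continuous fun z : E × K => ‖Φ z.2 z.1‖ := (hΦ.comp continuous_swap).norm
    exact hcont.continuousAt.eventually_lt continuousAt_const (by simpa [hΦ0] using hε)
  obtain ⟨δ, hδ, hball⟩ := Metric.eventually_nhds_iff.1 hnear
  exact ⟨δ, hδ, fun r ψ hψ => hball (by simpa using hψ) r (mem_univ r)⟩

/-- `C¹` on `[-h, 0]`, encoded as the pairs `(φ, φ')` of `C × C`. -/
def derivGraph (h : ℝ) (hh : -h ≤ 0) :
    Submodule ℝ (C(Icc (-h) 0, ℝ) × C(Icc (-h) 0, ℝ)) where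
  carrier := {p | ∀ t : Icc (-h) 0, HasDerivWithinAt (extF h hh p.1) (p.2 t) (Icc (-h) 0) t}
  add_mem' hp hq t := (hp t).add (hq t)
  zero_mem' _ := hasDerivWithinAt_const _ _ 0
  smul_mem' c _ hp t := (hp t).const_mul c

lemma restrict_mem_derivGraph {h : ℝ} (hh : -h ≤ 0) {f f' : C(ℝ, ℝ)}
    (hf : ∀ x, HasDerivAt f (f' x) x) :
    (f.restrict (Icc (-h) 0), f'.restrict (Icc (-h) 0)) ∈ derivGraph h hh := by
  intro t
  exact (hf t).hasDerivWithinAt.congr (fun y hy => by simp [extF, projIcc_of_mem hh hy])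
    (by simp [extF, projIcc_of_mem hh t.2])

lemma exists_mem_derivGraph_of_contDiffOn {h : ℝ} (hh : -h < 0) {φ : C(Icc (-h) 0, ℝ)}
    (hφ : ContDiffOn ℝ 1 (extF h hh.le φ) (Icc (-h) 0)) :
    ∃ Dφ, (φ, Dφ) ∈ derivGraph h hh.le ∧
      ∀ t : Icc (-h) 0, Dφ t = derivWithin (extF h hh.le φ) (Icc (-h) 0) t := by
  refine ⟨⟨fun t => derivWithin (extF h hh.le φ) (Icc (-h) 0) t,
    (hφ.continuousOn_derivWithin (uniqueDiffOn_Icc hh) le_rfl).domRestrict⟩,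
    fun t => (hφ.differentiableOn one_ne_zero t t.2).hasDerivWithinAt, fun _ => rfl⟩

lemma exists_mem_derivGraph_apply_zero_eq_one_norm_lt {h : ℝ} (hh : -h ≤ 0) {δ : ℝ}
    (hδ : 0 < δ) : ∃ φ Dφ, (φ, Dφ) ∈ derivGraph h hh ∧ Dφ ⟨0, hh, le_rfl⟩ = 1 ∧ ‖φ‖ < δ := by
  obtain ⟨s, hs, hsδ⟩ : ∃ s, 0 < s ∧ s < δ := ⟨δ / 2, half_pos hδ, half_lt_self hδ⟩
  let f : C(ℝ, ℝ) := ⟨fun x => s * Real.sin (x / s), by fun_prop⟩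
  let f' : C(ℝ, ℝ) := ⟨fun x => Real.cos (x / s), by fun_prop⟩
  have hf : ∀ x, HasDerivAt f (f' x) x := fun x =>
    (((hasDerivAt_id x).div_const s).sin.const_mul s).congr_deriv (by
      simp only [id_eq, one_div, ContinuousMap.coe_mk, f']; field_simp)
  refine ⟨_, _, restrict_mem_derivGraph hh hf, by simp [f'], ?_⟩
  refine lt_of_le_of_lt ((ContinuousMap.norm_le _ hs.le).2 fun t => ?_) hsδ
  simpa [f, abs_mul, abs_of_pos hs] using
    mul_le_of_le_one_right hs.le (Real.abs_sin_le_one (t / s))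

/-- projection onto moving nullspaces: for `K = J^k` (`J = [a,b]`),
`q : K × C → F` continuous and linear in the second variable, with `γ₁,…,γ_d ∈ C¹`,
`γ_m'(0) = 0`, such that `q(r,γ₁),…,q(r,γ_d)` is a basis of the `r`-independent range for
every `r`, and any `ε > 0`, there is a continuous map `χ : K → C¹` with `q(r,χ(r)) = 0`,
`(χ(r))'(0) = 1` and `|χ(r)|_C < ε` for all `r`.  (Continuity of `χ` into `C¹` is
expressed by continuity of `χ` and of the derivative map `Dχ` into `C`.) -/
theorem stmt8 (h : ℝ) (hh : 0 < h) (k : ℕ) (a b : ℝ)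
    {F : Type*} [NormedAddCommGroup F] [NormedSpace ℝ F] [FiniteDimensional ℝ F]
    (q : (Fin k → Set.Icc a b) → C(Set.Icc (-h) 0, ℝ) →ₗ[ℝ] F)
    (hqc : Continuous fun p : (Fin k → Set.Icc a b) × C(Set.Icc (-h) 0, ℝ) => q p.1 p.2)
    (d : ℕ) (γ : Fin d → C(Set.Icc (-h) 0, ℝ))
    (hγsm : ∀ m, ContDiffOn ℝ 1 (extF h (by linarith) (γ m)) (Set.Icc (-h) 0))
    (hγ0 : ∀ m, derivWithin (extF h (by linarith) (γ m)) (Set.Icc (-h) 0) 0 = 0)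
    (hbasis : ∀ r, LinearIndependent ℝ (fun m => q r (γ m)) ∧
      ∀ φ, q r φ ∈ Submodule.span ℝ (Set.range fun m => q r (γ m)))
    (ε : ℝ) (hε : 0 < ε) :
    ∃ χ Dχ : (Fin k → Set.Icc a b) → C(Set.Icc (-h) 0, ℝ),
      Continuous χ ∧ Continuous Dχ ∧
      ∀ r, q r (χ r) = 0 ∧
        (∀ t : Set.Icc (-h) 0,
          HasDerivWithinAt (extF h (by linarith) (χ r)) (Dχ r t) (Set.Icc (-h) 0) (t : ℝ)) ∧
        Dχ r ⟨0, by constructor <;> linarith⟩ = 1 ∧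
        ‖χ r‖ < ε := by
  have hh' : -h < 0 := by linarith
  obtain ⟨c, hc, hc0, hker⟩ := exists_continuous_coeffs_sub_sum_mem_ker q hqc γ
    (fun r => (hbasis r).1) (fun r => (hbasis r).2)
  obtain ⟨δ, hδ, hsmall⟩ := exists_pos_forall_norm_lt
    (Φ := fun r ψ => ψ - ∑ m, c r ψ m • γ m) (by fun_prop) (fun r => by simp [hc0]) hε
  obtain ⟨φ, Dφ, hφ, hDφ0, hφδ⟩ := exists_mem_derivGraph_apply_zero_eq_one_norm_lt hh'.le hδ
  choose Dγ hγ hDγ using fun m => exists_mem_derivGraph_of_contDiffOn hh' (hγsm m)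
  have hcφ : Continuous fun r => c r φ := hc.comp (continuous_id.prodMk continuous_const)
  refine ⟨fun r => φ - ∑ m, c r φ m • γ m, fun r => Dφ - ∑ m, c r φ m • Dγ m,
    by fun_prop, by fun_prop, fun r => ⟨hker r φ, ?_, ?_, hsmall r φ hφδ⟩⟩
  · have hmem : (φ, Dφ) - ∑ m, c r φ m • (γ m, Dγ m) ∈ derivGraph h hh'.le :=
      sub_mem hφ (sum_mem fun m _ => Submodule.smul_mem _ (c r φ m) (hγ m))
    show (_, _) ∈ derivGraph h hh'.le
    convert hmem using 1
    ext1 <;> simp [Prod.fst_sum, Prod.snd_sum]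
  · simp [hDφ0, hDγ, hγ0]
end

section
/- Let Q: J^k × C_n → F be continuous with each Q(r,·) linear, δ: J^k × W → ℝ^k continuously differentiable on I^k × W, and define Δ(r,φ) = δ(r, Q(r,φ)) on U = {(r,φ) ∈ I^k × C¹_n : Q(r,φ) ∈ W}. Then Δ is continuously differentiable on U, and for each (r,φ) ∈ U the partial derivative D₂Δ(r,φ): C¹_n → ℝ^k, ψ ↦ D₂δ(r,Q(r,φ))·Q(r,ψ), extends to a continuous linear map on C_n, and the map U × C_n → ℝ^k, (r,φ,χ) ↦ D₂δ(r,Q(r,φ))·Q(r,χ), is continuous. -/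
/-!
Each `Q(r,·)` is a continuous linear map `C_n → F`, so the chain rule gives
`D₂Δ(r,φ) = D₂δ(r,Q(r,φ)) ∘ Q(r,·) ∘ ι`, whose extension to `C_n` is obtained by dropping `ι`.
For the continuity of `(r,φ,χ) ↦ D₂δ(r,Q(r,φ))·Q(r,χ)`, write `D₂δ(r,y) = Dδ(r,y) ∘ inr`:
`Dδ` is continuous on the open set `I^k × W` and evaluation of operators is jointly continuous.
-/

section PartialFDeriv

variable {E F G : Type*} [NormedAddCommGroup E] [NormedSpace ℝ E]
  [NormedAddCommGroup F] [NormedSpace ℝ F] [NormedAddCommGroup G] [NormedSpace ℝ G]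

theorem DifferentiableAt.hasFDerivAt_partial_right {δ : E × F → G} {r : E} {y : F}
    (hδ : DifferentiableAt ℝ δ (r, y)) :
    HasFDerivAt (fun w => δ (r, w)) ((fderiv ℝ δ (r, y)).comp (.inr ℝ E F)) y :=
  hδ.hasFDerivAt.comp y (hasFDerivAt_prodMk_right r y)

theorem DifferentiableAt.fderiv_partial_right {δ : E × F → G} {r : E} {y : F}
    (hδ : DifferentiableAt ℝ δ (r, y)) :
    fderiv ℝ (fun w => δ (r, w)) y = (fderiv ℝ δ (r, y)).comp (.inr ℝ E F) :=
  hδ.hasFDerivAt_partial_right.fderiv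

theorem ContDiffOn.continuousOn_fderiv_partial_right_apply {δ : E × F → G}
    {s : Set (E × F)} (hs : IsOpen s) (hδ : ContDiffOn ℝ 1 δ s)
    {X : Type*} [TopologicalSpace X] {t : Set X} {a : X → E} {b v : X → F}
    (ha : ContinuousOn a t) (hb : ContinuousOn b t) (hv : ContinuousOn v t)
    (hab : Set.MapsTo (fun x => (a x, b x)) t s) :
    ContinuousOn (fun x => fderiv ℝ (fun w => δ (a x, w)) (b x) (v x)) t := by
  have hDδ : ContinuousOn (fun x => fderiv ℝ δ (a x, b x)) t :=
    (hδ.continuousOn_fderiv_of_isOpen hs le_rfl).comp (ha.prodMk hb) hab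
  have hcomp : ContinuousOn (fun x => fderiv ℝ δ (a x, b x) (0, v x)) t :=
    isBoundedBilinearMap_apply.continuous.comp_continuousOn
      (hDδ.prodMk (continuousOn_const.prodMk hv))
  refine hcomp.congr fun x hx => ?_
  have hdiff : DifferentiableAt ℝ δ (a x, b x) :=
    (hδ.differentiableOn one_ne_zero).differentiableAt (hs.mem_nhds (hab hx))
  rw [hdiff.fderiv_partial_right]
  rfl

end PartialFDeriv

theorem stmt18_general (h : ℝ) (k n : ℕ)
    {F : Type*} [NormedAddCommGroup F] [NormedSpace ℝ F]
    {C1n : Type*} [NormedAddCommGroup C1n] [NormedSpace ℝ C1n]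
    (ι : C1n →L[ℝ] C(Set.Icc (-h) 0, Fin n → ℝ))
    (Ik : Set (Fin k → ℝ)) (hIk : IsOpen Ik)
    (W : Set F) (hW : IsOpen W)
    (Q : (Fin k → ℝ) × C(Set.Icc (-h) 0, Fin n → ℝ) → F)
    (hQc : Continuous Q)
    (hQlin : ∀ r : Fin k → ℝ, IsLinearMap ℝ fun φ => Q (r, φ))
    (hQsm : ContDiffOn ℝ 1 (fun p : (Fin k → ℝ) × C1n => Q (p.1, ι p.2))
      (Ik ×ˢ Set.univ))
    (δ : (Fin k → ℝ) × F → Fin k → ℝ)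
    (hδ : ContDiffOn ℝ 1 δ (Ik ×ˢ W)) :
    ContDiffOn ℝ 1 (fun p : (Fin k → ℝ) × C1n => δ (p.1, Q (p.1, ι p.2)))
      {p : (Fin k → ℝ) × C1n | p.1 ∈ Ik ∧ Q (p.1, ι p.2) ∈ W} ∧
    (∀ p : (Fin k → ℝ) × C1n, p.1 ∈ Ik → Q (p.1, ι p.2) ∈ W →
      ∃ L : C1n →L[ℝ] (Fin k → ℝ),
        HasFDerivAt (fun ψ : C1n => δ (p.1, Q (p.1, ι ψ))) L p.2 ∧
        ∀ χ : C1n,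
          L χ = fderiv ℝ (fun w => δ (p.1, w)) (Q (p.1, ι p.2)) (Q (p.1, ι χ))) ∧
    (∀ p : (Fin k → ℝ) × C1n, p.1 ∈ Ik → Q (p.1, ι p.2) ∈ W →
      ∃ Le : C(Set.Icc (-h) 0, Fin n → ℝ) →L[ℝ] (Fin k → ℝ),
        ∀ χ : C(Set.Icc (-h) 0, Fin n → ℝ),
          Le χ = fderiv ℝ (fun w => δ (p.1, w)) (Q (p.1, ι p.2)) (Q (p.1, χ))) ∧
    ContinuousOn
      (fun x : ((Fin k → ℝ) × C1n) × C(Set.Icc (-h) 0, Fin n → ℝ) =>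
        fderiv ℝ (fun w => δ (x.1.1, w)) (Q (x.1.1, ι x.1.2)) (Q (x.1.1, x.2)))
      ({p : (Fin k → ℝ) × C1n | p.1 ∈ Ik ∧ Q (p.1, ι p.2) ∈ W} ×ˢ Set.univ) := by
  let Qr (r : Fin k → ℝ) : C(Set.Icc (-h) 0, Fin n → ℝ) →L[ℝ] F :=
    ⟨(hQlin r).mk' _, hQc.comp (continuous_const.prodMk continuous_id)⟩
  have hopen : IsOpen (Ik ×ˢ W) := hIk.prod hW
  refine ⟨?_, fun p hr hQ => ?_,
    fun p _ _ => ⟨(fderiv ℝ _ _).comp (Qr p.1), fun _ => rfl⟩, ?_⟩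
  · exact hδ.comp (contDiffOn_fst.prodMk (hQsm.mono fun p hp => ⟨hp.1, trivial⟩))
      fun p hp => hp
  · have hdiff : DifferentiableAt ℝ δ (p.1, Q (p.1, ι p.2)) :=
      (hδ.differentiableOn one_ne_zero).differentiableAt (hopen.mem_nhds ⟨hr, hQ⟩)
    have hpartial : DifferentiableAt ℝ (fun w => δ (p.1, w)) (Q (p.1, ι p.2)) :=
      hdiff.hasFDerivAt_partial_right.differentiableAt
    exact ⟨_, hpartial.hasFDerivAt.comp (f := (Qr p.1).comp ι) p.2
      (ContinuousLinearMap.hasFDerivAt _), fun _ => rfl⟩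
  · have hQι : Continuous fun x : ((Fin k → ℝ) × C1n) × C(Set.Icc (-h) 0, Fin n → ℝ) =>
        Q (x.1.1, ι x.1.2) :=
      hQc.comp (continuous_fst.fst.prodMk (ι.continuous.comp continuous_fst.snd))
    have hQχ : Continuous fun x : ((Fin k → ℝ) × C1n) × C(Set.Icc (-h) 0, Fin n → ℝ) =>
        Q (x.1.1, x.2) :=
      hQc.comp (continuous_fst.fst.prodMk continuous_snd)
    exact hδ.continuousOn_fderiv_partial_right_apply hopen continuous_fst.fst.continuousOn
      hQι.continuousOn hQχ.continuousOn fun x hx => hx.1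

/-- for `Δ(r,φ) = δ(r,Q(r,φ))` on
`U = {(r,φ) ∈ I^k × C¹_n : Q(r,φ) ∈ W}`, with `Q : J^k × C_n → F` continuous and linear
in the second variable whose restriction to `I^k × C¹_n` is `C¹`, and `δ` continuously
differentiable on `I^k × W`:  `Δ` is `C¹` on `U`; for each `(r,φ) ∈ U` the partial
derivative `D₂Δ(r,φ) : ψ ↦ D₂δ(r,Q(r,φ))·Q(r,ψ)` exists and extends to a continuous
linear map on `C_n`; and the map `(r,φ,χ) ↦ D₂δ(r,Q(r,φ))·Q(r,χ)` is continuous on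
`U × C_n`.  (`C¹_n` is modelled as an abstract normed space `C1n` with a continuous
linear inclusion `ι : C1n →L C_n`.) -/
theorem stmt18 (h : ℝ) (hh : 0 < h) (k n : ℕ)
    {F : Type*} [NormedAddCommGroup F] [NormedSpace ℝ F] [FiniteDimensional ℝ F]
    {C1n : Type*} [NormedAddCommGroup C1n] [NormedSpace ℝ C1n]
    (ι : C1n →L[ℝ] C(Set.Icc (-h) 0, Fin n → ℝ))
    (Ik : Set (Fin k → ℝ)) (hIk : IsOpen Ik)
    (W : Set F) (hW : IsOpen W)
    (Q : (Fin k → ℝ) × C(Set.Icc (-h) 0, Fin n → ℝ) → F)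
    (hQc : Continuous Q)
    (hQlin : ∀ r : Fin k → ℝ, IsLinearMap ℝ fun φ => Q (r, φ))
    (hQsm : ContDiffOn ℝ 1 (fun p : (Fin k → ℝ) × C1n => Q (p.1, ι p.2))
      (Ik ×ˢ Set.univ))
    (δ : (Fin k → ℝ) × F → Fin k → ℝ)
    (hδ : ContDiffOn ℝ 1 δ (Ik ×ˢ W)) :
    ContDiffOn ℝ 1 (fun p : (Fin k → ℝ) × C1n => δ (p.1, Q (p.1, ι p.2)))
      {p : (Fin k → ℝ) × C1n | p.1 ∈ Ik ∧ Q (p.1, ι p.2) ∈ W} ∧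
    (∀ p : (Fin k → ℝ) × C1n, p.1 ∈ Ik → Q (p.1, ι p.2) ∈ W →
      ∃ L : C1n →L[ℝ] (Fin k → ℝ),
        HasFDerivAt (fun ψ : C1n => δ (p.1, Q (p.1, ι ψ))) L p.2 ∧
        ∀ χ : C1n,
          L χ = fderiv ℝ (fun w => δ (p.1, w)) (Q (p.1, ι p.2)) (Q (p.1, ι χ))) ∧
    (∀ p : (Fin k → ℝ) × C1n, p.1 ∈ Ik → Q (p.1, ι p.2) ∈ W →
      ∃ Le : C(Set.Icc (-h) 0, Fin n → ℝ) →L[ℝ] (Fin k → ℝ),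
        ∀ χ : C(Set.Icc (-h) 0, Fin n → ℝ),
          Le χ = fderiv ℝ (fun w => δ (p.1, w)) (Q (p.1, ι p.2)) (Q (p.1, χ))) ∧
    ContinuousOn
      (fun x : ((Fin k → ℝ) × C1n) × C(Set.Icc (-h) 0, Fin n → ℝ) =>
        fderiv ℝ (fun w => δ (x.1.1, w)) (Q (x.1.1, ι x.1.2)) (Q (x.1.1, x.2)))
      ({p : (Fin k → ℝ) × C1n | p.1 ∈ Ik ∧ Q (p.1, ι p.2) ∈ W} ×ˢ Set.univ) :=
  stmt18_general h k n ι Ik hIk W hW Q hQc hQlin hQsm δ hδ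
end
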